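/- Let G be a unit interval graph on [n] with intervals [a_1,1],…,[a_n,n]. Then Y_G = Σ_D (−1)^{a(D)} e_1↑_D, where the sum is over all arc diagrams D on n vertices in which every vertex has at most one left arc, every arc (i,j) satisfies i,j ∈ [a_k,k] for some k, a(D) is the number of arcs of D, and ↑_D denotes the composition of inducings ↑_{i_2}^2 ↑_{i_3}^3 ⋯ ↑_{i_n}^n where (i_j, j) is the left arc at j (with i_j = j if j has no left arc). -/
import Mathlib


open scoped Classical

/-- Formal power series in the non-commuting variables `x 0, x 1, x 2, …` over `ℚ`,
represented by their coefficient function on words. -/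
abbrev NCS : Type := List ℕ → ℚ

/-- Product of two series in non-commuting variables (Cauchy product on words). -/
noncomputable def ncMul (f g : NCS) : NCS := fun w =>
  ∑ i ∈ Finset.range (w.length + 1), f (w.take i) * g (w.drop i)

/-- `p₁ = e₁ = x_1 + x_2 + ⋯`. -/
noncomputable def e1 : NCS := fun w => if w.length = 1 then 1 else 0

/-- The chromatic symmetric function in non-commuting variables of a graph on `Fin n`. -/
noncomputable def Y {n : ℕ} (G : SimpleGraph (Fin n)) : NCS := fun w =>
  if h : w.length = n then
    (if ∀ u v : Fin n, G.Adj u v →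
        w.get (Fin.cast h.symm u) ≠ w.get (Fin.cast h.symm v) then 1 else 0)
  else 0

/-- The induced series `f↑_j` (positions are 1-based): append a copy of the `j`-th
variable at the end of each monomial; extended linearly. -/
noncomputable def induce (f : NCS) (j : ℕ) : NCS := fun w =>
  if 1 ≤ j ∧ j + 1 ≤ w.length ∧ w.getLast? = (w.dropLast)[j - 1]? then f w.dropLast else 0

/-- `f↑_j^m`: for `j < m` this appends a copy of the `j`-th variable, and
`f↑_m^m = f ⬝ p₁`. -/
noncomputable def induceFull (f : NCS) (j m : ℕ) : NCS :=
  if j = m then ncMul f e1 else induce f j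

/-- An arc diagram on the vertices `0, 1, …, n-1` in which every vertex has at most one
left arc is encoded by a function `d` with `d j ≤ j`: vertex `j` has the left arc
`(d j, j)` when `d j < j` and no left arc when `d j = j`.  `↑_D` applies the
corresponding sequence of inducings `↑_{i_2}^2 ↑_{i_3}^3 ⋯ ↑_{i_n}^n` (1-based). -/
noncomputable def induceSeq {n : ℕ} (d : Fin n → Fin n) (f : NCS) : NCS :=
  (List.finRange n).foldl
    (fun (g : NCS) (v : Fin n) => if (v : ℕ) = 0 then g else induceFull g ((d v : ℕ) + 1) ((v : ℕ) + 1)) f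

/-- The unit interval graph on `Fin n` with intervals `[a k, k]` (where `a k ≤ k`). -/
def UIG {n : ℕ} (a : Fin n → Fin n) : SimpleGraph (Fin n) :=
  SimpleGraph.fromRel (fun i j => ∃ k, a k ≤ i ∧ i ≤ k ∧ a k ≤ j ∧ j ≤ k)


/-! ### Auxiliary lemmas -/

lemma ncMul_e1_apply (f : NCS) (w : List ℕ) :
    ncMul f e1 w = if 1 ≤ w.length then f w.dropLast else 0 := by
  unfold ncMul e1
  split_ifs with h1
  · rw [Finset.sum_eq_single (w.length - 1)]
    · rw [List.length_drop, if_pos (by omega), mul_one, List.dropLast_eq_take]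
    · intro i hi hne
      simp only [Finset.mem_range] at hi
      rw [List.length_drop, if_neg (by omega), mul_zero]
    · intro h; exact absurd (Finset.mem_range.mpr (by omega)) h
  · have h0 : w.length = 0 := by omega
    simp [List.length_drop, h0]

lemma getElem?_dropLast' (w : List ℕ) (i : ℕ) (h : i < w.length - 1) :
    w.dropLast[i]? = w[i]? := by
  rw [List.dropLast_eq_take, List.getElem?_take, if_pos h]

noncomputable def Gfold {n : ℕ} (d : Fin (n+1) → Fin (n+1)) (m : ℕ) : NCS :=
  ((List.finRange (n+1)).take m).foldl
    (fun (g : NCS) (v : Fin (n+1)) => if (v : ℕ) = 0 then g else induceFull g ((d v : ℕ) + 1) ((v : ℕ) + 1)) e1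

lemma induceSeq_eq_Gfold {n : ℕ} (d : Fin (n+1) → Fin (n+1)) :
    induceSeq d e1 = Gfold d (n+1) := by
  unfold induceSeq Gfold
  rw [List.take_of_length_le (by simp)]

lemma Gfold_one {n : ℕ} (d : Fin (n+1) → Fin (n+1)) : Gfold d 1 = e1 := by
  unfold Gfold
  rw [List.take_succ, List.getElem?_eq_getElem (by simp)]
  simp [List.getElem_finRange]

lemma Gfold_succ {n : ℕ} (d : Fin (n+1) → Fin (n+1)) (m : ℕ) (h1 : 1 ≤ m) (hm : m < n+1) :
    Gfold d (m+1) = induceFull (Gfold d m) ((d ⟨m, hm⟩ : ℕ) + 1) (m + 1) := by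
  unfold Gfold
  rw [List.take_succ, List.getElem?_eq_getElem (by simpa using hm), List.foldl_append]
  simp only [Option.toList_some, List.foldl_cons, List.foldl_nil, List.getElem_finRange,
    Fin.cast_mk, Fin.val_mk]
  rw [if_neg (by omega)]

lemma cond_drop {n : ℕ} (d : Fin (n+1) → Fin (n+1)) {m : ℕ} {w : List ℕ}
    (hw : w.length = m + 1) :
    (∀ v : Fin (n+1), (v:ℕ) < m → (d v:ℕ) < (v:ℕ) → w.dropLast[(v:ℕ)]? = w.dropLast[(d v:ℕ)]?) ↔
    (∀ v : Fin (n+1), (v:ℕ) < m → (d v:ℕ) < (v:ℕ) → w[(v:ℕ)]? = w[(d v:ℕ)]?) := by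
  constructor
  · intro h v hv hdv
    have := h v hv hdv
    rwa [getElem?_dropLast' _ _ (by omega), getElem?_dropLast' _ _ (by omega)] at this
  · intro h v hv hdv
    rw [getElem?_dropLast' _ _ (by omega), getElem?_dropLast' _ _ (by omega)]
    exact h v hv hdv

lemma cond_split {n : ℕ} (d : Fin (n+1) → Fin (n+1)) {m : ℕ} (hm : m < n+1) (w : List ℕ) :
    (∀ v : Fin (n+1), (v:ℕ) < m+1 → (d v:ℕ) < (v:ℕ) → w[(v:ℕ)]? = w[(d v:ℕ)]?) ↔
    ((∀ v : Fin (n+1), (v:ℕ) < m → (d v:ℕ) < (v:ℕ) → w[(v:ℕ)]? = w[(d v:ℕ)]?) ∧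
      (((d ⟨m, hm⟩ : ℕ) < m) → w[m]? = w[(d ⟨m, hm⟩ : ℕ)]?)) := by
  constructor
  · intro h
    exact ⟨fun v hv => h v (by omega), fun hdv => h ⟨m, hm⟩ (Nat.lt_succ_self m) hdv⟩
  · rintro ⟨h1, h2⟩ v hv hdv
    by_cases hvm : (v:ℕ) < m
    · exact h1 v hvm hdv
    · have hveq : v = ⟨m, hm⟩ := Fin.ext (show (v : ℕ) = m by omega)
      subst hveq
      exact h2 hdv

lemma Gfold_eval {n : ℕ} (d : Fin (n+1) → Fin (n+1)) (hd : ∀ j, d j ≤ j)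
    (m : ℕ) (h1 : 1 ≤ m) :
    m ≤ n + 1 → ∀ w : List ℕ,
      Gfold d m w = if (w.length = m ∧ ∀ v : Fin (n+1), (v:ℕ) < m → (d v:ℕ) < (v:ℕ) →
        w[(v:ℕ)]? = w[(d v:ℕ)]?) then 1 else 0 := by
  induction m, h1 using Nat.le_induction with
  | base =>
    intro _ w
    rw [Gfold_one]
    unfold e1
    refine if_congr ?_ rfl rfl
    constructor
    · intro h
      refine ⟨h, fun v hv hdv => ?_⟩
      exact absurd hdv (by have := Fin.le_def.mp (hd v); omega)
    · exact fun h => h.1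
  | succ m hm ih =>
    intro h2 w
    have hmn : m < n + 1 := by omega
    rw [Gfold_succ d m hm hmn]
    by_cases hdm : ((d ⟨m, hmn⟩ : ℕ)) = m
    · rw [induceFull, if_pos (by omega), ncMul_e1_apply]
      by_cases hw : w.length = m + 1
      · rw [if_pos (by omega), ih (by omega) w.dropLast]
        refine if_congr ?_ rfl rfl
        have hdl : w.dropLast.length = m := by rw [List.length_dropLast]; omega
        constructor
        · rintro ⟨-, h⟩
          refine ⟨hw, (cond_split d hmn w).mpr ⟨(cond_drop d hw).mp h, fun hlt => absurd hlt (by omega)⟩⟩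
        · rintro ⟨-, h⟩
          exact ⟨hdl, (cond_drop d hw).mpr ((cond_split d hmn w).mp h).1⟩
      · by_cases h0 : 1 ≤ w.length
        · rw [if_pos h0, ih (by omega) w.dropLast,
            if_neg (fun hx => by have := hx.1; rw [List.length_dropLast] at this; omega),
            if_neg (fun hx : _ ∧ _ => hw hx.1)]
        · rw [if_neg h0, if_neg (fun hx : _ ∧ _ => hw hx.1)]
    · have hdlt : (d ⟨m, hmn⟩ : ℕ) < m := by
        have h' := Fin.le_def.mp (hd ⟨m, hmn⟩)
        have h'' : ((⟨m, hmn⟩ : Fin (n+1)) : ℕ) = m := rfl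
        omega
      rw [induceFull, if_neg (by omega)]
      show (if _ ∧ _ ∧ _ then Gfold d m w.dropLast else 0) = _
      simp only [Nat.add_sub_cancel]
      by_cases hw : w.length = m + 1
      · have hgl : w.getLast? = w[m]? := by
          rw [List.getLast?_eq_getElem?, show w.length - 1 = m by omega]
        have hdl2 : w.dropLast[(d ⟨m, hmn⟩ : ℕ)]? = w[(d ⟨m, hmn⟩ : ℕ)]? :=
          getElem?_dropLast' _ _ (by omega)
        by_cases hc : w[m]? = w[(d ⟨m, hmn⟩ : ℕ)]?
        · rw [if_pos ⟨by omega, by omega, by rw [hgl, hdl2]; exact hc⟩,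
            ih (by omega) w.dropLast]
          refine if_congr ?_ rfl rfl
          have hdl : w.dropLast.length = m := by rw [List.length_dropLast]; omega
          constructor
          · rintro ⟨-, h⟩
            exact ⟨hw, (cond_split d hmn w).mpr ⟨(cond_drop d hw).mp h, fun _ => hc⟩⟩
          · rintro ⟨-, h⟩
            exact ⟨hdl, (cond_drop d hw).mpr ((cond_split d hmn w).mp h).1⟩
        · rw [if_neg (show ¬_ from ?_), if_neg (show ¬_ from ?_)]
          · rintro ⟨-, h⟩
            exact hc (((cond_split d hmn w).mp h).2 hdlt)
          · rintro ⟨-, -, hEq⟩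
            rw [hgl, hdl2] at hEq
            exact hc hEq
      · rw [if_neg (show ¬(w.length = m + 1 ∧ _) from fun h => hw h.1)]
        split_ifs with hcond
        · obtain ⟨-, hlen, -⟩ := hcond
          rw [ih (by omega) w.dropLast, if_neg]
          rintro ⟨hl, -⟩
          rw [List.length_dropLast] at hl
          omega
        · rfl

noncomputable def tset {n : ℕ} (a : Fin (n+1) → Fin (n+1)) : Fin (n+1) → Finset (Fin (n+1)) :=
  fun j => Finset.univ.filter (fun x => x ≤ j ∧ (x = j ∨ ∃ k, a k ≤ x ∧ x ≤ k ∧ a k ≤ j ∧ j ≤ k))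

noncomputable def cset {n : ℕ} (a : Fin (n+1) → Fin (n+1)) (w : List ℕ) : Fin (n+1) → Finset (Fin (n+1)) :=
  fun j => ((tset a j).erase j).filter (fun x => w[(j:ℕ)]? = w[(x:ℕ)]?)

lemma mem_tset {n : ℕ} (a : Fin (n+1) → Fin (n+1)) (j x : Fin (n+1)) :
    x ∈ tset a j ↔ (x ≤ j ∧ (x = j ∨ ∃ k, a k ≤ x ∧ x ≤ k ∧ a k ≤ j ∧ j ≤ k)) := by
  simp [tset]

lemma mem_cset {n : ℕ} (a : Fin (n+1) → Fin (n+1)) (w : List ℕ) (j x : Fin (n+1)) :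
    x ∈ cset a w j ↔ (x ≠ j ∧ x ≤ j ∧ (∃ k, a k ≤ x ∧ x ≤ k ∧ a k ≤ j ∧ j ≤ k) ∧
      w[(j:ℕ)]? = w[(x:ℕ)]?) := by
  simp only [cset, Finset.mem_filter, Finset.mem_erase, mem_tset]
  constructor
  · rintro ⟨⟨hne, hle, (heq | hex)⟩, hc⟩
    · exact absurd heq hne
    · exact ⟨hne, hle, hex, hc⟩
  · rintro ⟨hne, hle, hex, hc⟩
    exact ⟨⟨hne, hle, Or.inr hex⟩, hc⟩

lemma sign_prod {n : ℕ} (d : Fin (n+1) → Fin (n+1)) (hd : ∀ j, d j ≤ j) (w : List ℕ) :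
    ((-1:ℚ) ^ (Finset.univ.filter fun j => d j ≠ j).card) *
      (if (∀ v : Fin (n+1), (d v:ℕ) < (v:ℕ) → w[(v:ℕ)]? = w[(d v:ℕ)]?) then 1 else 0)
    = ∏ j : Fin (n+1), (if d j = j then (1:ℚ) else if w[(j:ℕ)]? = w[((d j):ℕ)]? then -1 else 0) := by
  have h1 : ((-1:ℚ) ^ (Finset.univ.filter fun j => d j ≠ j).card)
      = ∏ j : Fin (n+1), (if d j ≠ j then (-1:ℚ) else 1) := by
    rw [← Finset.prod_filter, Finset.prod_const]
  have h2 : (if (∀ v : Fin (n+1), (d v:ℕ) < (v:ℕ) → w[(v:ℕ)]? = w[(d v:ℕ)]?) then (1:ℚ) else 0)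
      = ∏ j : Fin (n+1), (if ((d j:ℕ) < (j:ℕ) → w[(j:ℕ)]? = w[((d j):ℕ)]?) then (1:ℚ) else 0) := by
    by_cases hall : ∀ v : Fin (n+1), (d v:ℕ) < (v:ℕ) → w[(v:ℕ)]? = w[(d v:ℕ)]?
    · rw [if_pos hall]
      exact (Finset.prod_eq_one (fun j _ => if_pos (hall j))).symm
    · rw [if_neg hall]
      push_neg at hall
      obtain ⟨v, hlt, hne⟩ := hall
      refine (Finset.prod_eq_zero (Finset.mem_univ v) ?_).symm
      rw [if_neg (fun h => hne (h hlt))]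
  rw [h1, h2, ← Finset.prod_mul_distrib]
  refine Finset.prod_congr rfl fun j _ => ?_
  by_cases hj : d j = j
  · have hlt : ¬ (d j : ℕ) < (j:ℕ) := by rw [hj]; omega
    simp [hj, hlt]
  · have hlt : (d j : ℕ) < (j:ℕ) :=
      lt_of_le_of_ne (Fin.le_def.mp (hd j)) (fun h => hj (Fin.ext h))
    by_cases hc : w[(j:ℕ)]? = w[((d j):ℕ)]?
    · simp [hj, hlt, hc]
    · simp [hj, hlt, hc]

lemma innerSumEval {n : ℕ} (a : Fin (n+1) → Fin (n+1)) (w : List ℕ) (j : Fin (n+1)) :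
    (∑ x ∈ tset a j, (if x = j then (1:ℚ) else if w[(j:ℕ)]? = w[(x:ℕ)]? then -1 else 0))
    = 1 - ((cset a w j).card : ℚ) := by
  have hj : j ∈ tset a j := (mem_tset a j j).mpr ⟨le_refl j, Or.inl rfl⟩
  rw [← Finset.add_sum_erase _ _ hj, if_pos rfl]
  have hcong : ∀ x ∈ (tset a j).erase j,
      (if x = j then (1:ℚ) else if w[(j:ℕ)]? = w[(x:ℕ)]? then -1 else 0)
      = -(if w[(j:ℕ)]? = w[(x:ℕ)]? then (1:ℚ) else 0) := by
    intro x hx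
    rw [if_neg (Finset.ne_of_mem_erase hx)]
    split_ifs <;> ring
  rw [Finset.sum_congr rfl hcong, Finset.sum_neg_distrib, Finset.sum_boole]
  rw [cset]
  ring

lemma final_prod {n : ℕ} (a : Fin (n+1) → Fin (n+1)) (w : List ℕ) :
    (∏ j : Fin (n+1), ((1:ℚ) - ((cset a w j).card : ℚ)))
    = if (∀ u v : Fin (n+1), (UIG a).Adj u v → w[(u:ℕ)]? ≠ w[(v:ℕ)]?) then 1 else 0 := by
  by_cases hp : ∀ u v : Fin (n+1), (UIG a).Adj u v → w[(u:ℕ)]? ≠ w[(v:ℕ)]?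
  · rw [if_pos hp]
    apply Finset.prod_eq_one
    intro j _
    have hempty : cset a w j = ∅ := by
      rw [Finset.eq_empty_iff_forall_notMem]
      intro x hx
      obtain ⟨hne, hle, hex, hc⟩ := (mem_cset a w j x).mp hx
      have hadj : (UIG a).Adj x j := by
        rw [UIG, SimpleGraph.fromRel_adj]
        exact ⟨hne, Or.inl hex⟩
      exact hp x j hadj hc.symm
    rw [hempty]
    simp
  · rw [if_neg hp]
    push_neg at hp
    obtain ⟨u, v, hadj, hcuv⟩ := hp
    rw [UIG, SimpleGraph.fromRel_adj] at hadj
    obtain ⟨hne, hrel⟩ := hadj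
    have hkey : ∃ p q : Fin (n+1), p < q ∧ w[(p:ℕ)]? = w[(q:ℕ)]? ∧
        ∃ k, a k ≤ p ∧ p ≤ k ∧ a k ≤ q ∧ q ≤ k := by
      have hex : ∃ k, a k ≤ u ∧ u ≤ k ∧ a k ≤ v ∧ v ≤ k := by
        rcases hrel with ⟨k, h1, h2, h3, h4⟩ | ⟨k, h1, h2, h3, h4⟩
        · exact ⟨k, h1, h2, h3, h4⟩
        · exact ⟨k, h3, h4, h1, h2⟩
      rcases lt_or_gt_of_ne hne with h | h
      · exact ⟨u, v, h, hcuv, hex⟩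
      · obtain ⟨k, h1, h2, h3, h4⟩ := hex
        exact ⟨v, u, h, hcuv.symm, k, h3, h4, h1, h2⟩
    obtain ⟨p, q, hpq, hcpq, k, hk1, hk2, hk3, hk4⟩ := hkey
    have hqT : q ∈ Finset.univ.filter (fun j : Fin (n+1) => (cset a w j).Nonempty) := by
      rw [Finset.mem_filter]
      exact ⟨Finset.mem_univ q,
        ⟨p, (mem_cset a w q p).mpr ⟨ne_of_lt hpq, le_of_lt hpq, ⟨k, hk1, hk2, hk3, hk4⟩, hcpq.symm⟩⟩⟩
    set T := Finset.univ.filter (fun j : Fin (n+1) => (cset a w j).Nonempty) with hT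
    have hTne : T.Nonempty := ⟨q, hqT⟩
    set v₀ := T.min' hTne with hv₀
    have hv₀T : v₀ ∈ T := T.min'_mem hTne
    have hv₀ne : (cset a w v₀).Nonempty := (Finset.mem_filter.mp hv₀T).2
    have hcard : (cset a w v₀).card = 1 := by
      have hle1 : (cset a w v₀).card ≤ 1 := by
        rw [Finset.card_le_one]
        intro i hi i' hi'
        by_contra hii
        have key : ∀ x y : Fin (n+1), x ∈ cset a w v₀ → y ∈ cset a w v₀ → x < y → False := by
          intro x y hx hy hxy
          obtain ⟨hxne, hxle, ⟨k', hk1', hk2', hk3', hk4'⟩, hxc⟩ := (mem_cset a w v₀ x).mp hx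
          obtain ⟨hyne, hyle, -, hyc⟩ := (mem_cset a w v₀ y).mp hy
          have hyT : y ∈ T := by
            rw [hT, Finset.mem_filter]
            refine ⟨Finset.mem_univ y, ⟨x, (mem_cset a w y x).mpr
              ⟨ne_of_lt hxy, le_of_lt hxy,
                ⟨k', hk1', hk2', le_trans hk1' (le_of_lt hxy), le_trans hyle hk4'⟩,
                hyc.symm.trans hxc⟩⟩⟩
          have hmin := T.min'_le y hyT
          have hylt : y < v₀ := lt_of_le_of_ne hyle hyne
          rw [← hv₀] at hmin
          exact absurd hmin (not_le.mpr hylt)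
        rcases lt_trichotomy i i' with h | h | h
        · exact key i i' hi hi' h
        · exact hii h
        · exact key i' i hi' hi h
      have hpos := Finset.card_pos.mpr hv₀ne
      omega
    apply Finset.prod_eq_zero (Finset.mem_univ v₀)
    rw [hcard]
    norm_num

/-- The signed combinatorial formula: `Y_G = Σ_D (−1)^{a(D)} e₁↑_D`, summed over all
arc diagrams `D` in which every vertex has at most one left arc and every arc `(i,j)`
satisfies `i, j ∈ [a k, k]` for some `k`; `a(D)` is the number of arcs. -/
theorem uig_signed_formula (n : ℕ) (a : Fin (n + 1) → Fin (n + 1)) (ha : ∀ k, a k ≤ k) :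
    Y (UIG a) =
      ∑ᶠ d ∈ {d : Fin (n + 1) → Fin (n + 1) |
          (∀ j, d j ≤ j) ∧
          ∀ j, d j = j ∨ ∃ k, a k ≤ d j ∧ d j ≤ k ∧ a k ≤ j ∧ j ≤ k},
        ((-1 : ℚ) ^ (Finset.univ.filter fun j => d j ≠ j).card) • induceSeq d e1 := by
  have hset : {d : Fin (n + 1) → Fin (n + 1) |
      (∀ j, d j ≤ j) ∧
      ∀ j, d j = j ∨ ∃ k, a k ≤ d j ∧ d j ≤ k ∧ a k ≤ j ∧ j ≤ k}
      = ↑(Fintype.piFinset (tset a)) := by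
    ext d
    simp only [Set.mem_setOf_eq, Finset.mem_coe, Fintype.mem_piFinset, mem_tset]
    rw [← forall_and]
  rw [hset, finsum_mem_coe_finset]
  funext w
  rw [Finset.sum_apply]
  by_cases hw : w.length = n + 1
  · have hcol : ∀ u : Fin (n+1), w[(u:ℕ)]? = some (w.get (Fin.cast hw.symm u)) := by
      intro u
      rw [List.getElem?_eq_getElem (by have := u.isLt; omega)]
      rfl
    have hY : Y (UIG a) w = (if (∀ u v : Fin (n+1), (UIG a).Adj u v →
        w[(u:ℕ)]? ≠ w[(v:ℕ)]?) then (1:ℚ) else 0) := by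
      unfold Y
      rw [dif_pos hw]
      refine if_congr ?_ rfl rfl
      refine forall_congr' fun u => forall_congr' fun v => imp_congr_right fun _ => ?_
      rw [hcol u, hcol v]
      simp
    have hterm : ∀ d ∈ Fintype.piFinset (tset a),
        (((-1:ℚ) ^ (Finset.univ.filter fun j => d j ≠ j).card) • induceSeq d e1) w
        = ∏ j : Fin (n+1), (if d j = j then (1:ℚ)
            else if w[(j:ℕ)]? = w[((d j):ℕ)]? then -1 else 0) := by
      intro d hdS
      have hd : ∀ j, d j ≤ j := fun j =>
        ((mem_tset a j (d j)).mp (Fintype.mem_piFinset.mp hdS j)).1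
      rw [Pi.smul_apply, smul_eq_mul, induceSeq_eq_Gfold,
        Gfold_eval d hd (n+1) (by omega) (le_refl _) w]
      rw [show (if (w.length = n+1 ∧ ∀ v : Fin (n+1), (v:ℕ) < n+1 → (d v:ℕ) < (v:ℕ) →
            w[(v:ℕ)]? = w[(d v:ℕ)]?) then (1:ℚ) else 0)
          = (if (∀ v : Fin (n+1), (d v:ℕ) < (v:ℕ) → w[(v:ℕ)]? = w[(d v:ℕ)]?)
            then (1:ℚ) else 0) from
        if_congr ⟨fun h v => h.2 v v.isLt, fun h => ⟨hw, fun v _ => h v⟩⟩ rfl rfl]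
      exact sign_prod d hd w
    have hfac : (∏ j : Fin (n+1), ∑ x ∈ tset a j, (if x = j then (1:ℚ)
          else if w[(j:ℕ)]? = w[(x:ℕ)]? then -1 else 0))
        = ∑ d ∈ Fintype.piFinset (tset a), ∏ j : Fin (n+1), (if d j = j then (1:ℚ)
            else if w[(j:ℕ)]? = w[((d j):ℕ)]? then -1 else 0) :=
      Finset.prod_univ_sum (tset a) (fun j x => if x = j then (1:ℚ)
        else if w[(j:ℕ)]? = w[(x:ℕ)]? then -1 else 0)
    rw [hY, Finset.sum_congr rfl hterm, ← hfac,
      Finset.prod_congr rfl (fun j _ => innerSumEval a w j)]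
    exact (final_prod a w).symm
  · rw [show Y (UIG a) w = 0 by unfold Y; rw [dif_neg hw]]
    refine (Finset.sum_eq_zero ?_).symm
    intro d hdS
    have hd : ∀ j, d j ≤ j := fun j =>
      ((mem_tset a j (d j)).mp (Fintype.mem_piFinset.mp hdS j)).1
    rw [Pi.smul_apply, smul_eq_mul, induceSeq_eq_Gfold,
      Gfold_eval d hd (n+1) (by omega) (le_refl _) w,
      if_neg (fun h : _ ∧ _ => hw h.1), mul_zero]
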